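/- Under Assumption (A1), the function x ↦ V(x) is continuous, concave, and non-decreasing on [0,∞). -/

import Mathlib

open MeasureTheory

namespace QH

variable {Ω : Type*} [MeasurableSpace Ω]

/-- The set of nonnegative measurable random variables. -/
def L0plus (Ω : Type*) [MeasurableSpace Ω] : Set (Ω → ℝ) :=
  {f | Measurable f ∧ ∀ ω, 0 ≤ f ω}

/-- A randomized test: a measurable function with values in `[0,1]`. -/
def IsRandTest (X : Ω → ℝ) : Prop :=
  Measurable X ∧ ∀ ω, X ω ∈ Set.Icc (0 : ℝ) 1

/-- The feasible randomized tests for significance level `x` and null collection `H`. -/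
def Tests (μ : Measure Ω) (H : Set (Ω → ℝ)) (x : ℝ) : Set (Ω → ℝ) :=
  {X | IsRandTest X ∧ ∀ h ∈ H, ∫ ω, h ω * X ω ∂μ ≤ x}

/-- The worst-case power of a test `X` over the alternative collection `G`. -/
noncomputable def powerInf (μ : Measure Ω) (G : Set (Ω → ℝ)) (X : Ω → ℝ) : ℝ :=
  sInf ((fun g => ∫ ω, g ω * X ω ∂μ) '' G)

/-- The value of the randomized composite hypothesis testing problem. -/
noncomputable def V (μ : Measure Ω) (G H : Set (Ω → ℝ)) (x : ℝ) : ℝ :=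
  sSup (powerInf μ G '' Tests μ H x)

/-- The value of the pure composite hypothesis testing problem. -/
noncomputable def V1 (μ : Measure Ω) (G H : Set (Ω → ℝ)) (x : ℝ) : ℝ :=
  sSup (powerInf μ G '' {X ∈ Tests μ H x | ∀ ω, X ω = 0 ∨ X ω = 1})

/-- The set `ℋₓ` of nonnegative random variables that satisfy the budget
constraint against every feasible randomized test. -/
def HxSet (μ : Measure Ω) (H : Set (Ω → ℝ)) (x : ℝ) : Set (Ω → ℝ) :=
  {h | h ∈ L0plus Ω ∧ ∀ X ∈ Tests μ H x, ∫ ω, h ω * X ω ∂μ ≤ x}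

/-- A set of (nonnegative) random variables is closed under convergence in probability,
as a subset of `L⁰⁺`. -/
def ClosedInProb (μ : Measure Ω) (S : Set (Ω → ℝ)) : Prop :=
  ∀ (f : ℕ → Ω → ℝ) (g : Ω → ℝ), (∀ n, f n ∈ S) → g ∈ L0plus Ω →
    TendstoInMeasure μ f Filter.atTop g → g ∈ S

/-- The closure of a set of random variables under convergence in probability. -/
def clProb (μ : Measure Ω) (S : Set (Ω → ℝ)) : Set (Ω → ℝ) :=
  {g | ∃ f : ℕ → Ω → ℝ, (∀ n, f n ∈ S) ∧ TendstoInMeasure μ f Filter.atTop g}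

/-- Assumption (A1): `𝒢, ℋ ⊆ L⁰⁺`, `sup_{X ∈ 𝒢∪ℋ} 𝔼[X] < ∞`, and `𝒢` is convex and
closed under convergence in probability. -/
def A1 (μ : Measure Ω) (G H : Set (Ω → ℝ)) : Prop :=
  G ⊆ L0plus Ω ∧ H ⊆ L0plus Ω ∧ (∀ f ∈ G ∪ H, Integrable f μ) ∧
  BddAbove ((fun f => ∫ ω, f ω ∂μ) '' (G ∪ H)) ∧
  Convex ℝ G ∧ ClosedInProb μ G

/-- The smallest σ-algebra making every random variable in `G ∪ H` measurable. -/
def sigmaGen (G H : Set (Ω → ℝ)) : MeasurableSpace Ω :=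
  ⨆ f ∈ G ∪ H, MeasurableSpace.comap f inferInstance

/-- The Neyman–Pearson conditions at level `x` for the tuple `(Ĝ, Ĥ, â, X̂, B)`. -/
def NPconds (μ : Measure Ω) (G H : Set (Ω → ℝ)) (x : ℝ)
    (Ghat Hhat : Ω → ℝ) (ahat : ℝ) (Xhat B : Ω → ℝ) : Prop :=
  Ghat ∈ G ∧ Hhat ∈ clProb μ (convexHull ℝ H) ∧ 0 ≤ ahat ∧ Xhat ∈ Tests μ H x ∧
  Measurable B ∧ (∀ ω, B ω ∈ Set.Icc (0 : ℝ) 1) ∧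
  (∀ ω, Xhat ω = (if ahat * Hhat ω < Ghat ω then 1 else 0)
      + B ω * (if Ghat ω = ahat * Hhat ω then 1 else 0)) ∧
  (∀ h ∈ H, ∫ ω, h ω * Xhat ω ∂μ ≤ ∫ ω, Hhat ω * Xhat ω ∂μ) ∧
  (∫ ω, Hhat ω * Xhat ω ∂μ = x) ∧
  (∀ g ∈ G, ∫ ω, Ghat ω * Xhat ω ∂μ ≤ ∫ ω, g ω * Xhat ω ∂μ)

end QH

/-! Monotonicity is inclusion of the feasible sets, and concavity comes from mixing tests: if `X`
is feasible at level `x` and `Y` at level `y`, then `a • X + b • Y` is feasible at level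
`a x + b y`, and the worst-case power, an infimum of linear functionals, is concave. Concavity
gives continuity on `(0, ∞)`. At `0` the monotone `V` could still jump, and compactness excludes
this: tests at levels `1 / (n + 1)` with power above `b` are bounded in `L²`, so the closed convex
hulls of their tails have a common point (the minimal-norm points of these nested hulls form a
Cauchy sequence). That point is a test at level `0` with power at least `b`, by dominated
convergence along an a.e. convergent subsequence. -/

open Filter Topology Set

section Hilbert

variable {E : Type*} [NormedAddCommGroup E] [InnerProductSpace ℝ E] [CompleteSpace E]

theorem exists_mem_forall_norm_le_of_convex {K : Set E} (hne : K.Nonempty) (hcl : IsClosed K)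
    (hcv : Convex ℝ K) : ∃ v ∈ K, ∀ w ∈ K, ‖v‖ ≤ ‖w‖ := by
  obtain ⟨v, hv, hmin⟩ := exists_norm_eq_iInf_of_complete_convex hne hcl.isComplete hcv 0
  refine ⟨v, hv, fun w hw => ?_⟩
  have : ⨅ w : K, ‖(0 : E) - w‖ ≤ ‖(0 : E) - w‖ :=
    ciInf_le ⟨0, forall_mem_range.2 fun _ => norm_nonneg _⟩ (⟨w, hw⟩ : K)
  simp only [zero_sub, norm_neg] at hmin this
  exact hmin ▸ this

/-- The minimal-norm points of the `C n` form a Cauchy sequence, by the parallelogram law. -/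
theorem nonempty_iInter_of_antitone_of_convex {C : ℕ → Set E} (hanti : Antitone C)
    (hne : ∀ n, (C n).Nonempty) (hcl : ∀ n, IsClosed (C n)) (hcv : ∀ n, Convex ℝ (C n))
    (hbd : Bornology.IsBounded (C 0)) : (⋂ n, C n).Nonempty := by
  choose v hv hmin using fun n => exists_mem_forall_norm_le_of_convex (hne n) (hcl n) (hcv n)
  obtain ⟨R, hR⟩ := isBounded_iff_forall_norm_le.1 hbd
  have hmono : Monotone (‖v ·‖) := fun m n hmn => hmin m (v n) (hanti hmn (hv n))
  have hbdd : BddAbove (range (‖v ·‖)) :=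
    ⟨R, forall_mem_range.2 fun n => hR _ (hanti (Nat.zero_le n) (hv n))⟩
  set D := ⨆ n, ‖v n‖
  have hD : ∀ n, ‖v n‖ ≤ D := fun n => le_ciSup hbdd n
  have hdist : ∀ m n N, N ≤ m → N ≤ n → dist (v m) (v n) ≤ √(4 * D ^ 2 - 4 * ‖v N‖ ^ 2) := by
    intro m n N hm hn
    have hmid : (1 / 2 : ℝ) • v m + (1 / 2 : ℝ) • v n ∈ C N :=
      hcv N (hanti hm (hv m)) (hanti hn (hv n)) (by norm_num) (by norm_num) (by norm_num)
    have hsum : 2 * ‖v N‖ ≤ ‖v m + v n‖ := by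
      have h := hmin N _ hmid
      rw [← smul_add, norm_smul] at h
      norm_num at h
      linarith
    have hpar := parallelogram_law_with_norm ℝ (v m) (v n)
    rw [dist_eq_norm, ← abs_norm]
    refine Real.abs_le_sqrt ?_
    nlinarith [hD m, hD n, norm_nonneg (v m), norm_nonneg (v n), norm_nonneg (v N)]
  have hlim : Tendsto (fun N => √(4 * D ^ 2 - 4 * ‖v N‖ ^ 2)) atTop (𝓝 0) := by
    have hc : Continuous fun t : ℝ => √(4 * D ^ 2 - 4 * t ^ 2) := by fun_prop
    simpa [Function.comp_def] using (hc.tendsto D).comp (tendsto_atTop_ciSup hmono hbdd)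
  obtain ⟨x, hx⟩ := cauchySeq_tendsto_of_complete (cauchySeq_of_le_tendsto_0 _ hdist hlim)
  exact ⟨x, mem_iInter.2 fun k => (hcl k).mem_of_tendsto hx
    (eventually_atTop.2 ⟨k, fun n hn => hanti hn (hv n)⟩)⟩

theorem exists_forall_mem_of_eventually_mem {T : ℕ → E} (hT : Bornology.IsBounded (range T)) :
    ∃ v : E, ∀ K : Set E, IsClosed K → Convex ℝ K → (∀ᶠ k in atTop, T k ∈ K) → v ∈ K := by
  set C : ℕ → Set E := fun n => closure (convexHull ℝ (T '' Ici n))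
  have hanti : Antitone C := fun m n hmn =>
    closure_mono (convexHull_mono (image_mono (Ici_subset_Ici.2 hmn)))
  have hne : ∀ n, (C n).Nonempty := fun n =>
    ⟨T n, subset_closure (subset_convexHull ℝ _ (mem_image_of_mem T (mem_Ici.2 le_rfl)))⟩
  have hbd : Bornology.IsBounded (C 0) :=
    (isBounded_convexHull.2 (hT.subset (image_subset_range _ _))).closure
  obtain ⟨v, hv⟩ := nonempty_iInter_of_antitone_of_convex hanti hne (fun _ => isClosed_closure)
    (fun _ => (convex_convexHull ℝ _).closure) hbd
  refine ⟨v, fun K hK hKc hev => ?_⟩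
  obtain ⟨N, hN⟩ := eventually_atTop.1 hev
  exact closure_minimal (convexHull_min (image_subset_iff.2 fun k hk => hN k hk) hKc) hK
    (mem_iInter.1 hv N)

end Hilbert

section Integral

variable {Ω : Type*} [MeasurableSpace Ω] {μ : Measure Ω}

theorem MeasureTheory.Integrable.mul_of_ae_mem_Icc {f u : Ω → ℝ} (hf : Integrable f μ)
    (hu : AEStronglyMeasurable u μ) (hu01 : ∀ᵐ ω ∂μ, u ω ∈ Icc (0 : ℝ) 1) :
    Integrable (fun ω => f ω * u ω) μ :=
  hf.mul_bdd hu (hu01.mono fun ω hω => by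
    rw [Real.norm_eq_abs, abs_le]; exact ⟨by linarith [hω.1], hω.2⟩)

theorem integral_mul_smul_add_smul {f u w : Ω → ℝ} (hu : Integrable (fun ω => f ω * u ω) μ)
    (hw : Integrable (fun ω => f ω * w ω) μ) (a b : ℝ) :
    ∫ ω, f ω * (a • u + b • w) ω ∂μ = a * ∫ ω, f ω * u ω ∂μ + b * ∫ ω, f ω * w ω ∂μ := by
  simp only [Pi.add_apply, Pi.smul_apply, smul_eq_mul, mul_add, mul_left_comm (f _)]
  rw [integral_add (hu.const_mul a) (hw.const_mul b), integral_const_mul, integral_const_mul]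

end Integral

namespace QH

variable {Ω : Type*} [MeasurableSpace Ω] {μ : Measure Ω} {G H : Set (Ω → ℝ)}

theorem IsRandTest.integrable_mul {f X : Ω → ℝ} (hf : Integrable f μ) (hX : IsRandTest X) :
    Integrable (fun ω => f ω * X ω) μ :=
  hf.mul_of_ae_mem_Icc hX.1.aestronglyMeasurable (ae_of_all _ hX.2)

theorem IsRandTest.smul_add_smul {X Y : Ω → ℝ} (hX : IsRandTest X) (hY : IsRandTest Y)
    {a b : ℝ} (ha : 0 ≤ a) (hb : 0 ≤ b) (hab : a + b = 1) : IsRandTest (a • X + b • Y) :=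
  ⟨(hX.1.const_smul a).add (hY.1.const_smul b),
    fun ω => convex_Icc (0 : ℝ) 1 (hX.2 ω) (hY.2 ω) ha hb hab⟩

theorem IsRandTest.memLp [IsFiniteMeasure μ] {X : Ω → ℝ} (hX : IsRandTest X)
    (p : ENNReal) : MemLp X p μ :=
  MemLp.of_bound hX.1.aestronglyMeasurable 1 (ae_of_all _ fun ω => by
    rw [Real.norm_of_nonneg (hX.2 ω).1]; exact (hX.2 ω).2)

theorem exists_isRandTest_ae_eq {u : Ω → ℝ} (hu : Measurable u)
    (hu01 : ∀ᵐ ω ∂μ, u ω ∈ Icc (0 : ℝ) 1) : ∃ X, IsRandTest X ∧ X =ᵐ[μ] u :=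
  ⟨fun ω => projIcc 0 1 zero_le_one (u ω),
    ⟨measurable_subtype_coe.comp
      ((continuous_projIcc (h := zero_le_one)).measurable.comp hu),
      fun ω => (projIcc 0 1 zero_le_one (u ω)).2⟩,
    hu01.mono fun ω hω => by simp [projIcc_of_mem _ hω]⟩

theorem zero_mem_tests {x : ℝ} (hx : 0 ≤ x) : (0 : Ω → ℝ) ∈ Tests μ H x :=
  ⟨⟨measurable_const, fun _ => ⟨le_rfl, zero_le_one⟩⟩, fun _ _ => by simpa using hx⟩

theorem nonempty_tests {x : ℝ} (hx : 0 ≤ x) : (Tests μ H x).Nonempty :=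
  ⟨0, zero_mem_tests hx⟩

theorem tests_mono : Monotone (Tests μ H) :=
  fun _ _ hxy _ hX => ⟨hX.1, fun h hh => (hX.2 h hh).trans hxy⟩

theorem smul_add_smul_mem_tests (hHint : ∀ h ∈ H, Integrable h μ) {X Y : Ω → ℝ} {x y : ℝ}
    (hX : X ∈ Tests μ H x) (hY : Y ∈ Tests μ H y) {a b : ℝ} (ha : 0 ≤ a) (hb : 0 ≤ b)
    (hab : a + b = 1) : a • X + b • Y ∈ Tests μ H (a * x + b * y) := by
  refine ⟨hX.1.smul_add_smul hY.1 ha hb hab, fun h hh => ?_⟩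
  rw [integral_mul_smul_add_smul (hX.1.integrable_mul (hHint h hh))
    (hY.1.integrable_mul (hHint h hh))]
  exact add_le_add (mul_le_mul_of_nonneg_left (hX.2 h hh) ha)
    (mul_le_mul_of_nonneg_left (hY.2 h hh) hb)

def testConstraintLp (μ : Measure Ω) (f : Ω → ℝ) (S : Set ℝ) : Set (Lp ℝ 2 μ) :=
  {u | (∀ᵐ ω ∂μ, u ω ∈ Icc (0 : ℝ) 1) ∧ ∫ ω, f ω * u ω ∂μ ∈ S}

theorem isClosed_testConstraintLp {f : Ω → ℝ} (hf : Integrable f μ) {S : Set ℝ}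
    (hS : IsClosed S) : IsClosed (testConstraintLp μ f S) := by
  refine IsSeqClosed.isClosed fun u w hu hlim => ?_
  obtain ⟨ns, -, hae⟩ := (tendstoInMeasure_of_tendsto_Lp hlim).exists_seq_tendsto_ae
  have hbox : ∀ᵐ ω ∂μ, ∀ j, u (ns j) ω ∈ Icc (0 : ℝ) 1 := ae_all_iff.2 fun j => (hu (ns j)).1
  have hint : Tendsto (fun j => ∫ ω, f ω * u (ns j) ω ∂μ) atTop (𝓝 (∫ ω, f ω * w ω ∂μ)) := by
    refine tendsto_integral_of_dominated_convergence (‖f ·‖)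
      (fun j => hf.aestronglyMeasurable.mul (Lp.aestronglyMeasurable _)) hf.norm
      (fun j => ?_) (hae.mono fun ω hω => hω.const_mul (f ω))
    filter_upwards [(hu (ns j)).1] with ω hω
    rw [norm_mul]
    exact mul_le_of_le_one_right (norm_nonneg _) (by rw [Real.norm_of_nonneg hω.1]; exact hω.2)
  refine ⟨?_, hS.mem_of_tendsto hint (Eventually.of_forall fun j => (hu (ns j)).2)⟩
  filter_upwards [hbox, hae] with ω hω hconv
  exact isClosed_Icc.mem_of_tendsto hconv (Eventually.of_forall hω)

theorem convex_testConstraintLp {f : Ω → ℝ} (hf : Integrable f μ) {S : Set ℝ}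
    (hS : Convex ℝ S) : Convex ℝ (testConstraintLp μ f S) := by
  intro u hu w hw a b ha hb hab
  have hco : ⇑(a • u + b • w) =ᵐ[μ] a • ⇑u + b • ⇑w := by
    filter_upwards [Lp.coeFn_add (a • u) (b • w), Lp.coeFn_smul a u, Lp.coeFn_smul b w]
      with ω h₁ h₂ h₃
    rw [h₁, Pi.add_apply, h₂, h₃]
    rfl
  refine ⟨?_, ?_⟩
  · filter_upwards [hco, hu.1, hw.1] with ω hω h₁ h₂
    rw [hω]
    exact convex_Icc 0 1 h₁ h₂ ha hb hab
  · rw [integral_congr_ae (hco.mono fun ω hω => by rw [hω]),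
      integral_mul_smul_add_smul (hf.mul_of_ae_mem_Icc (Lp.aestronglyMeasurable u) hu.1)
        (hf.mul_of_ae_mem_Icc (Lp.aestronglyMeasurable w) hw.1)]
    exact hS hu.2 hw.2 ha hb hab

theorem exists_mem_tests_of_tendsto [IsFiniteMeasure μ]
    (hGint : ∀ g ∈ G, Integrable g μ) (hHint : ∀ h ∈ H, Integrable h μ) {X : ℕ → Ω → ℝ}
    {x : ℕ → ℝ} {x₀ c : ℝ} (hX : ∀ n, X n ∈ Tests μ H (x n)) (hx : Tendsto x atTop (𝓝 x₀))
    (hc : ∀ n, ∀ g ∈ G, c ≤ ∫ ω, g ω * X n ω ∂μ) :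
    ∃ Y ∈ Tests μ H x₀, ∀ g ∈ G, c ≤ ∫ ω, g ω * Y ω ∂μ := by
  set T : ℕ → Lp ℝ 2 μ := fun n => ((hX n).1.memLp 2).toLp (X n)
  have hTX : ∀ n, ⇑(T n) =ᵐ[μ] X n := fun n => MemLp.coeFn_toLp _
  have hT : ∀ n f S, ∫ ω, f ω * X n ω ∂μ ∈ S → T n ∈ testConstraintLp μ f S := by
    intro n f S hS
    refine ⟨(hTX n).mono fun ω hω => hω ▸ (hX n).1.2 ω, ?_⟩
    rwa [integral_congr_ae ((hTX n).mono fun ω hω => by rw [hω])]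
  have hbd : Bornology.IsBounded (range T) := isBounded_iff_forall_norm_le.2
    ⟨_, forall_mem_range.2 fun n => Lp.norm_le_of_ae_bound zero_le_one
      ((hTX n).mono fun ω hω => by
        rw [hω, Real.norm_of_nonneg ((hX n).1.2 ω).1]; exact ((hX n).1.2 ω).2)⟩
  obtain ⟨v, hv⟩ := exists_forall_mem_of_eventually_mem hbd
  have hvK : ∀ f, Integrable f μ → ∀ S, IsClosed S → Convex ℝ S →
      (∀ᶠ n in atTop, ∫ ω, f ω * X n ω ∂μ ∈ S) → v ∈ testConstraintLp μ f S :=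
    fun f hf S hSc hSv hev => hv _ (isClosed_testConstraintLp hf hSc)
      (convex_testConstraintLp hf hSv) (hev.mono fun n hn => hT n f S hn)
  obtain ⟨Y, hY, hYv⟩ := exists_isRandTest_ae_eq (Lp.stronglyMeasurable v).measurable
    (hvK 0 (integrable_zero _ _ _) univ isClosed_univ convex_univ (Eventually.of_forall
      fun _ => mem_univ _)).1
  have hYint : ∀ f : Ω → ℝ, ∫ ω, f ω * Y ω ∂μ = ∫ ω, f ω * v ω ∂μ :=
    fun f => integral_congr_ae (hYv.mono fun ω hω => congrArg (f ω * ·) hω)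
  refine ⟨Y, ⟨hY, fun h hh => le_of_forall_pos_le_add fun δ hδ => ?_⟩, fun g hg => ?_⟩
  · have hev : ∀ᶠ n in atTop, ∫ ω, h ω * X n ω ∂μ ∈ Iic (x₀ + δ) :=
      (hx.eventually (eventually_le_nhds (lt_add_of_pos_right x₀ hδ))).mono
        fun n hn => ((hX n).2 h hh).trans hn
    exact hYint h ▸ (hvK h (hHint h hh) _ isClosed_Iic (convex_Iic _) hev).2
  · exact hYint g ▸ (hvK g (hGint g hg) _ isClosed_Ici (convex_Ici c)
      (Eventually.of_forall fun n => hc n g hg)).2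

theorem powerInf_le (hGL : G ⊆ L0plus Ω) {X g : Ω → ℝ} (hX : IsRandTest X) (hg : g ∈ G) :
    powerInf μ G X ≤ ∫ ω, g ω * X ω ∂μ :=
  csInf_le ⟨0, forall_mem_image.2 fun _ hg' =>
    integral_nonneg fun ω => mul_nonneg ((hGL hg').2 ω) (hX.2 ω).1⟩ (mem_image_of_mem _ hg)

theorem le_powerInf (hG : G.Nonempty) {X : Ω → ℝ} {c : ℝ}
    (h : ∀ g ∈ G, c ≤ ∫ ω, g ω * X ω ∂μ) : c ≤ powerInf μ G X :=
  le_csInf (hG.image _) (forall_mem_image.2 h)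

theorem powerInf_empty : powerInf μ (∅ : Set (Ω → ℝ)) = fun _ => 0 :=
  funext fun _ => by simp [powerInf]

theorem concaveOn_powerInf (hGL : G ⊆ L0plus Ω) (hG : G.Nonempty)
    (hGint : ∀ g ∈ G, Integrable g μ) : ConcaveOn ℝ {X | IsRandTest X} (powerInf μ G) := by
  refine ⟨fun X hX Y hY a b ha hb hab => IsRandTest.smul_add_smul hX hY ha hb hab,
    fun X hX Y hY a b ha hb hab => le_powerInf hG fun g hg => ?_⟩
  rw [integral_mul_smul_add_smul (IsRandTest.integrable_mul (hGint g hg) hX)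
    (IsRandTest.integrable_mul (hGint g hg) hY)]
  exact add_le_add (mul_le_mul_of_nonneg_left (powerInf_le hGL hX hg) ha)
    (mul_le_mul_of_nonneg_left (powerInf_le hGL hY hg) hb)

theorem bddAbove_powerInf_image_tests (hGL : G ⊆ L0plus Ω) (hG : G.Nonempty)
    (hGint : ∀ g ∈ G, Integrable g μ) (x : ℝ) : BddAbove (powerInf μ G '' Tests μ H x) := by
  obtain ⟨g, hg⟩ := hG
  refine ⟨∫ ω, g ω ∂μ, forall_mem_image.2 fun X hX => (powerInf_le hGL hX.1 hg).trans ?_⟩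
  exact integral_mono (hX.1.integrable_mul (hGint g hg)) (hGint g hg)
    fun ω => mul_le_of_le_one_right ((hGL hg).2 ω) (hX.1.2 ω).2

theorem powerInf_le_V (hGL : G ⊆ L0plus Ω) (hG : G.Nonempty)
    (hGint : ∀ g ∈ G, Integrable g μ) {X : Ω → ℝ} {x : ℝ} (hX : X ∈ Tests μ H x) :
    powerInf μ G X ≤ V μ G H x :=
  le_csSup (bddAbove_powerInf_image_tests hGL hG hGint x) (mem_image_of_mem _ hX)

theorem exists_lt_powerInf_of_lt_V {x c : ℝ} (hx : 0 ≤ x) (h : c < V μ G H x) :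
    ∃ X ∈ Tests μ H x, c < powerInf μ G X := by
  obtain ⟨_, ⟨X, hX, rfl⟩, hc⟩ := exists_lt_of_lt_csSup ((nonempty_tests hx).image _) h
  exact ⟨X, hX, hc⟩

theorem V_empty {x : ℝ} (hx : 0 ≤ x) : V μ ∅ H x = 0 := by
  rw [V, powerInf_empty, (nonempty_tests hx).image_const, csSup_singleton]

theorem monotoneOn_V (hGL : G ⊆ L0plus Ω) (hG : G.Nonempty)
    (hGint : ∀ g ∈ G, Integrable g μ) : MonotoneOn (V μ G H) (Ici 0) :=
  fun _ hx y _ hxy => csSup_le_csSup (bddAbove_powerInf_image_tests hGL hG hGint y)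
    ((nonempty_tests hx).image _) (image_mono (tests_mono hxy))

theorem concaveOn_V (hGL : G ⊆ L0plus Ω) (hG : G.Nonempty) (hGint : ∀ g ∈ G, Integrable g μ)
    (hHint : ∀ h ∈ H, Integrable h μ) : ConcaveOn ℝ (Ici 0) (V μ G H) := by
  refine ⟨convex_Ici 0, fun x hx y hy a b ha hb hab => le_of_forall_pos_le_add fun ε hε => ?_⟩
  obtain ⟨X, hX, hVX⟩ := exists_lt_powerInf_of_lt_V (G := G) hx (sub_lt_self (V μ G H x) hε)
  obtain ⟨Y, hY, hVY⟩ := exists_lt_powerInf_of_lt_V (G := G) hy (sub_lt_self (V μ G H y) hε)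
  calc a • V μ G H x + b • V μ G H y
      = a • (V μ G H x - ε) + b • (V μ G H y - ε) + ε := by
        simp only [smul_eq_mul]; linear_combination ε * hab
    _ ≤ a • powerInf μ G X + b • powerInf μ G Y + ε := by
        gcongr
    _ ≤ powerInf μ G (a • X + b • Y) + ε := by
        gcongr; exact (concaveOn_powerInf hGL hG hGint).2 hX.1 hY.1 ha hb hab
    _ ≤ V μ G H (a • x + b • y) + ε := by
        gcongr; exact powerInf_le_V hGL hG hGint (smul_add_smul_mem_tests hHint hX hY ha hb hab)

theorem exists_pos_V_lt [IsFiniteMeasure μ] (hGL : G ⊆ L0plus Ω) (hG : G.Nonempty)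
    (hGint : ∀ g ∈ G, Integrable g μ) (hHint : ∀ h ∈ H, Integrable h μ) {a : ℝ}
    (ha : V μ G H 0 < a) : ∃ δ > 0, V μ G H δ < a := by
  by_contra! hV
  obtain ⟨b, hb0, hba⟩ := exists_between ha
  have hX : ∀ n : ℕ, ∃ X ∈ Tests μ H (1 / ((n : ℝ) + 1)), b < powerInf μ G X := fun n =>
    exists_lt_powerInf_of_lt_V (by positivity) (hba.trans_le (hV _ (by positivity)))
  choose X hX hbX using hX
  obtain ⟨Y, hY, hbY⟩ := exists_mem_tests_of_tendsto hGint hHint hX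
    tendsto_one_div_add_atTop_nhds_zero_nat
    fun n g hg => (hbX n).le.trans (powerInf_le hGL (hX n).1 hg)
  exact hb0.not_ge ((le_powerInf hG hbY).trans (powerInf_le_V hGL hG hGint hY))

theorem continuousWithinAt_V_zero [IsFiniteMeasure μ] (hGL : G ⊆ L0plus Ω) (hG : G.Nonempty)
    (hGint : ∀ g ∈ G, Integrable g μ) (hHint : ∀ h ∈ H, Integrable h μ) :
    ContinuousWithinAt (V μ G H) (Ici 0) 0 := by
  have hmono := monotoneOn_V (H := H) (μ := μ) hGL hG hGint
  refine tendsto_order.2 ⟨fun a ha => eventually_nhdsWithin_of_forall fun y hy =>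
    ha.trans_le (hmono (mem_Ici.2 le_rfl) hy hy), fun a ha => ?_⟩
  obtain ⟨δ, hδ, hVδ⟩ := exists_pos_V_lt hGL hG hGint hHint ha
  filter_upwards [inter_mem_nhdsWithin (Ici 0) (Iio_mem_nhds hδ)] with y hy
  exact (hmono hy.1 hδ.le hy.2.le).trans_lt hVδ

theorem continuousOn_V [IsFiniteMeasure μ] (hGL : G ⊆ L0plus Ω) (hG : G.Nonempty)
    (hGint : ∀ g ∈ G, Integrable g μ) (hHint : ∀ h ∈ H, Integrable h μ) :
    ContinuousOn (V μ G H) (Ici 0) := by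
  intro x hx
  rcases (mem_Ici.1 hx).eq_or_lt with rfl | hpos
  · exact continuousWithinAt_V_zero hGL hG hGint hHint
  · exact (concaveOn_V hGL hG hGint hHint).continuousOn_interior.continuousAt
      (by rw [interior_Ici]; exact Ioi_mem_nhds hpos) |>.continuousWithinAt

end QH

/-- Under Assumption (A1), `x ↦ V(x)` is continuous, concave, and
non-decreasing on `[0,∞)`. -/
theorem stmt_4 {Ω : Type*} [MeasurableSpace Ω] (μ : MeasureTheory.Measure Ω)
    [MeasureTheory.IsProbabilityMeasure μ]
    (G H : Set (Ω → ℝ)) (hA1 : QH.A1 μ G H) :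
    ContinuousOn (QH.V μ G H) (Set.Ici 0) ∧
    ConcaveOn ℝ (Set.Ici 0) (QH.V μ G H) ∧
    MonotoneOn (QH.V μ G H) (Set.Ici 0) := by
  obtain ⟨hGL, -, hint, -, -, -⟩ := hA1
  have hGint : ∀ g ∈ G, Integrable g μ := fun g hg => hint g (Or.inl hg)
  have hHint : ∀ h ∈ H, Integrable h μ := fun h hh => hint h (Or.inr hh)
  rcases G.eq_empty_or_nonempty with rfl | hG
  · have hV : EqOn (QH.V μ ∅ H) 0 (Ici 0) := fun _ hx => QH.V_empty hx
    exact ⟨continuousOn_const.congr hV, (concaveOn_const 0 (convex_Ici 0)).congr hV.symm,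
      fun _ hx _ hy _ => by simp [hV hx, hV hy]⟩
  · exact ⟨QH.continuousOn_V hGL hG hGint hHint, QH.concaveOn_V hGL hG hGint hHint,
      QH.monotoneOn_V hGL hG hGint⟩
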